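/- arXiv:2109.08772 — 4 statements merged into one kernel-verified Lean document; each statement's English description precedes it below -/
import Mathlib

section
/- Let R be a commutative ring, J an ideal, and L ⊆ M R-modules. The J-basically full closure is idempotent: (J•(J•L :_M J) :_M J) = (J•L :_M J). -/
/-- The colon submodule `(L :_M J) = {x ∈ M : J • x ⊆ L}`. -/
def Submodule.icolon {R M : Type*} [CommRing R] [AddCommGroup M] [Module R M]
    (L : Submodule R M) (J : Ideal R) : Submodule R M where
  carrier := {x | ∀ r ∈ J, r • x ∈ L}
  add_mem' := fun {a b} ha hb r hr => by
    rw [smul_add]; exact L.add_mem (ha r hr) (hb r hr)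
  zero_mem' := fun r hr => by simp
  smul_mem' := fun c x hx r hr => by
    rw [smul_comm]; exact L.smul_mem c (hx r hr)

/-! `N ↦ J • N` is left adjoint to `L ↦ (L :_M J)`, so the `J`-basically full closure
`L ↦ (J • L :_M J)` is the closure operator of this Galois connection, hence idempotent. -/

namespace Submodule

theorem smul_le_iff_le_icolon {R M : Type*} [CommRing R] [AddCommGroup M] [Module R M]
    (J : Ideal R) (N L : Submodule R M) : J • N ≤ L ↔ N ≤ L.icolon J :=
  smul_le.trans ⟨fun h _ hx r hr => h r hr _ hx, fun h r hr _ hx => h hx r hr⟩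

theorem gc_smul_icolon {R M : Type*} [CommRing R] [AddCommGroup M] [Module R M]
    (J : Ideal R) :
    GaloisConnection (fun N : Submodule R M => J • N) (fun L => L.icolon J) :=
  smul_le_iff_le_icolon J

end Submodule

/-- The J-basically full closure is idempotent. -/
theorem jbf_idempotent {R M : Type*} [CommRing R] [AddCommGroup M] [Module R M]
    (J : Ideal R) (L : Submodule R M) :
    (J • ((J • L).icolon J)).icolon J = (J • L).icolon J :=
  (Submodule.gc_smul_icolon J).u_l_u_eq_u (J • L)
end

section
/- Let (R,m) be a Noetherian local ring, J a finitely generated ideal, and L ⊆ N ⊆ M finitely generated R-modules. If N ⊆ (J•(L + m•N) :_M J), then N ⊆ (J•L :_M J). (That is, J-basically full closure is a Nakayama closure.) -/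
theorem Submodule.le_icolon_iff_smul_le {R M : Type*} [CommRing R] [AddCommGroup M] [Module R M]
    {L N : Submodule R M} {J : Ideal R} : N ≤ L.icolon J ↔ J • N ≤ L :=
  ⟨fun h => Submodule.smul_le.2 fun _ hr _ hx => h hx _ hr,
    fun h _ hx _ hr => h (Submodule.smul_mem_smul hr hx)⟩

theorem jbf_nakayama_general {R M : Type*} [CommRing R] [IsNoetherianRing R] [IsLocalRing R]
    [AddCommGroup M] [Module R M] [Module.Finite R M]
    (J : Ideal R) (L N : Submodule R M)
    (h : N ≤ (J • (L ⊔ IsLocalRing.maximalIdeal R • N)).icolon J) :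
    N ≤ (J • L).icolon J := by
  rw [Submodule.le_icolon_iff_smul_le] at h ⊢
  have hJN : J • N ≤ J • L ⊔ IsLocalRing.maximalIdeal R • (J • N) := by
    rwa [Submodule.smul_sup, smul_comm] at h
  exact Submodule.le_of_le_smul_of_le_jacobson_bot (IsNoetherian.noetherian _)
    (IsLocalRing.maximalIdeal_le_jacobson _) hJN

/-- J-basically full closure is a Nakayama closure on finitely generated modules
over a Noetherian local ring. -/
theorem jbf_nakayama {R M : Type*} [CommRing R] [IsNoetherianRing R] [IsLocalRing R]
    [AddCommGroup M] [Module R M] [Module.Finite R M]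
    (J : Ideal R) (hJ : J.FG) (L N : Submodule R M) (hLN : L ≤ N)
    (h : N ≤ (J • (L ⊔ IsLocalRing.maximalIdeal R • N)).icolon J) :
    N ≤ (J • L).icolon J :=
  jbf_nakayama_general J L N h
end

section
/- In R = k[[x,y]] with m = (x,y), the ideal I = (x³, x²y², y³) satisfies (m²·I :_R m²) = m³, which strictly contains I, while (m·I :_R m) = I. -/
/-!
All ideals involved are monomial ideals. A power series lies in the ideal spanned by finitely many
monomials `X^d` iff every exponent in its support dominates one of the `d`; products of monomial
ideals correspond to sums of exponent sets, and the colon ideal `(J : (X^g)_{g ∈ G})` of a monomial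
ideal `J` is the monomial ideal of the exponents `e` with `e + g` in the upper closure of the
exponents of `J` for every `g ∈ G`. The three claims thereby become inequalities between exponent
vectors in `ℕ²`, settled coordinatewise.
-/

open MvPowerSeries
open scoped Pointwise

namespace MvPowerSeries

variable {σ : Type*} (R : Type*) [CommSemiring R]

noncomputable def monomialIdeal (D : Set (σ →₀ ℕ)) : Ideal (MvPowerSeries σ R) :=
  Ideal.span ((monomial · 1) '' D)

variable {R}

theorem monomial_mem_monomialIdeal {D : Set (σ →₀ ℕ)} {d : σ →₀ ℕ} (hd : d ∈ D) :
    monomial d (1 : R) ∈ monomialIdeal R D :=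
  Ideal.subset_span ⟨d, hd, rfl⟩

theorem monomialIdeal_mono {D D' : Set (σ →₀ ℕ)} (h : D ⊆ D') :
    monomialIdeal R D ≤ monomialIdeal R D' :=
  Ideal.span_mono (Set.image_mono h)

theorem mem_upperClosure_of_mem_monomialIdeal {D : Set (σ →₀ ℕ)} {f : MvPowerSeries σ R}
    (hf : f ∈ monomialIdeal R D) {e : σ →₀ ℕ} (he : coeff e f ≠ 0) : e ∈ upperClosure D := by
  classical
  induction hf using Submodule.span_induction generalizing e with
  | mem g hg =>
    obtain ⟨d, hd, rfl⟩ := hg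
    rw [coeff_monomial] at he
    exact ⟨d, hd, (ite_ne_right_iff.1 he).1.ge⟩
  | zero => simp at he
  | add a b _ _ ha hb =>
    rw [map_add] at he
    by_cases ha0 : coeff e a = 0
    · exact hb (by simpa [ha0] using he)
    · exact ha ha0
  | smul a g _ hg =>
    rw [smul_eq_mul, coeff_mul] at he
    obtain ⟨p, hp, hne⟩ := Finset.exists_ne_zero_of_sum_ne_zero he
    obtain ⟨d, hd, hde⟩ := hg (right_ne_zero_of_mul hne)
    refine ⟨d, hd, hde.trans ?_⟩
    rw [← Finset.HasAntidiagonal.mem_antidiagonal.1 hp]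
    exact le_add_self

theorem mem_monomialIdeal_of_forall_coeff_ne_zero {D : Set (σ →₀ ℕ)} (hD : D.Finite)
    {f : MvPowerSeries σ R} (hf : ∀ e, coeff e f ≠ 0 → e ∈ upperClosure D) :
    f ∈ monomialIdeal R D := by
  classical
  induction D, hD using Set.Finite.induction_on generalizing f with
  | empty =>
    obtain rfl : f = 0 := ext fun e => by_contra fun he => by simpa using hf e he
    exact zero_mem _
  | @insert d D _ _ ih =>
    -- split off the terms divisible by `X^d`
    let g : MvPowerSeries σ R := fun e => coeff (e + d) f
    let f' : MvPowerSeries σ R := fun e => if d ≤ e then 0 else coeff e f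
    have hsplit : f = monomial d 1 * g + f' := by
      ext e
      rw [map_add, coeff_monomial_mul, one_mul]
      change _ = _ + ite _ _ _
      by_cases hde : d ≤ e
      · rw [if_pos hde, if_pos hde, add_zero]
        exact congrArg (coeff · f) (tsub_add_cancel_of_le hde).symm
      · rw [if_neg hde, if_neg hde, zero_add]
    rw [hsplit]
    refine add_mem (Ideal.mul_mem_right _ _ (monomial_mem_monomialIdeal (Set.mem_insert d D)))
      (monomialIdeal_mono (Set.subset_insert d D) (ih fun e he => ?_))
    change ite _ _ _ ≠ 0 at he
    have hde : ¬ d ≤ e := fun hde => he (if_pos hde)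
    rw [if_neg hde] at he
    obtain ⟨d', hd', hd'e⟩ := hf e he
    exact ⟨d', (Set.mem_insert_iff.1 hd').resolve_left (by rintro rfl; exact hde hd'e), hd'e⟩

theorem mem_monomialIdeal_iff {D : Set (σ →₀ ℕ)} (hD : D.Finite) {f : MvPowerSeries σ R} :
    f ∈ monomialIdeal R D ↔ ∀ e, coeff e f ≠ 0 → e ∈ upperClosure D :=
  ⟨fun hf _ he => mem_upperClosure_of_mem_monomialIdeal hf he,
    mem_monomialIdeal_of_forall_coeff_ne_zero hD⟩

theorem monomialIdeal_mul (D₁ D₂ : Set (σ →₀ ℕ)) :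
    monomialIdeal R D₁ * monomialIdeal R D₂ = monomialIdeal R (D₁ + D₂) := by
  rw [monomialIdeal, monomialIdeal, monomialIdeal, Ideal.span_mul_span', ← Set.image2_add,
    ← Set.image2_mul]
  exact congrArg _ (Set.image_image2_distrib fun a b => by rw [monomial_mul_monomial, mul_one]).symm

theorem monomial_mul_mem_monomialIdeal_iff {D : Set (σ →₀ ℕ)} (hD : D.Finite)
    {f : MvPowerSeries σ R} (a : σ →₀ ℕ) :
    monomial a 1 * f ∈ monomialIdeal R D ↔ ∀ e, coeff e f ≠ 0 → e + a ∈ upperClosure D := by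
  rw [mem_monomialIdeal_iff hD]
  refine ⟨fun h e he => ?_, fun h e he => ?_⟩
  · rw [add_comm]
    exact h _ (by rwa [coeff_add_monomial_mul, one_mul])
  · rw [coeff_monomial_mul, one_mul] at he
    have hae : a ≤ e := (ite_ne_right_iff.1 he).1
    rw [if_pos hae] at he
    simpa [tsub_add_cancel_of_le hae] using h _ he

theorem mem_colon_monomialIdeal_iff {I : Ideal (MvPowerSeries σ R)} {G : Set (σ →₀ ℕ)}
    {f : MvPowerSeries σ R} :
    f ∈ I.colon (monomialIdeal R G) ↔ ∀ g ∈ G, monomial g 1 * f ∈ I := by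
  rw [monomialIdeal, Ideal.colon_span, Submodule.mem_colon, Set.forall_mem_image]
  simp only [smul_eq_mul, mul_comm f]

theorem colon_monomialIdeal_eq {C D : Set (σ →₀ ℕ)} (hC : C.Finite) (hD : D.Finite)
    (G : Set (σ →₀ ℕ)) (h : ∀ e, (∀ g ∈ G, e + g ∈ upperClosure D) ↔ e ∈ upperClosure C) :
    (monomialIdeal R D).colon (monomialIdeal R G) = monomialIdeal R C := by
  ext f
  simp only [mem_colon_monomialIdeal_iff, monomial_mul_mem_monomialIdeal_iff hD,
    mem_monomialIdeal_iff hC, ← h]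
  exact ⟨fun hf e he g hg => hf g hg e he, fun hf g hg e he => hf e he g hg⟩

theorem monomialIdeal_le_monomialIdeal_iff [Nontrivial R] {D D' : Set (σ →₀ ℕ)} :
    monomialIdeal R D ≤ monomialIdeal R D' ↔ D ⊆ upperClosure D' := by
  refine ⟨fun h d hd => mem_upperClosure_of_mem_monomialIdeal (h (monomial_mem_monomialIdeal hd))
    (by rw [coeff_monomial_same]; exact one_ne_zero), fun h => ?_⟩
  rw [monomialIdeal, Ideal.span_le]
  rintro _ ⟨d, hd, rfl⟩
  obtain ⟨d', hd', hd'd⟩ := h hd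
  change monomial d 1 ∈ _
  rw [← tsub_add_cancel_of_le hd'd, ← mul_one (1 : R), ← monomial_mul_monomial]
  exact Ideal.mul_mem_left _ _ (monomial_mem_monomialIdeal hd')

theorem span_X_pair_eq_monomialIdeal (i j : σ) :
    Ideal.span {X i, X j} = monomialIdeal R {Finsupp.single i 1, Finsupp.single j 1} := by
  rw [monomialIdeal, Set.image_pair]
  rfl

end MvPowerSeries

namespace BasicallyFullExample

open Finsupp

abbrev mExponents : Set (Fin 2 →₀ ℕ) := {single 0 1, single 1 1}

abbrev iExponents : Set (Fin 2 →₀ ℕ) := {single 0 3, single 0 2 + single 1 2, single 1 3}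

theorem forall_add_mem_upperClosure_sq_iff (e : Fin 2 →₀ ℕ) :
    (∀ g ∈ mExponents + mExponents,
        e + g ∈ upperClosure (mExponents + mExponents + iExponents)) ↔
      e ∈ upperClosure (mExponents + mExponents + mExponents) := by
  simp only [mExponents, iExponents, mem_upperClosure, ← Set.image2_add, Set.exists_mem_image2,
    Set.forall_mem_image2]
  simp [Finsupp.le_def, Fin.forall_fin_two]
  omega

theorem forall_add_mem_upperClosure_iff (e : Fin 2 →₀ ℕ) :
    (∀ g ∈ mExponents, e + g ∈ upperClosure (mExponents + iExponents)) ↔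
      e ∈ upperClosure iExponents := by
  simp only [mExponents, iExponents, mem_upperClosure, ← Set.image2_add, Set.exists_mem_image2]
  simp [Finsupp.le_def, Fin.forall_fin_two]
  omega

theorem iExponents_subset_upperClosure :
    iExponents ⊆ upperClosure (mExponents + mExponents + mExponents) := by
  simp only [mExponents, iExponents, Set.insert_subset_iff, Set.singleton_subset_iff,
    SetLike.mem_coe, mem_upperClosure, ← Set.image2_add, Set.exists_mem_image2]
  simp [Finsupp.le_def, Fin.forall_fin_two]

theorem not_subset_upperClosure_iExponents :
    ¬ mExponents + mExponents + mExponents ⊆ upperClosure iExponents := by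
  simp only [mExponents, iExponents, ← Set.image2_add, Set.image2_subset_iff,
    Set.forall_mem_image2, SetLike.mem_coe, mem_upperClosure]
  simp [Finsupp.le_def, Fin.forall_fin_two]

end BasicallyFullExample

open MvPowerSeries BasicallyFullExample

/-- In `R = k[[x,y]]` with `m = (x,y)`, the ideal `I = (x³, x²y², y³)` satisfies
`(m²·I :_R m²) = m³`, which strictly contains `I`, while `(m·I :_R m) = I`. -/
theorem bf_example {k : Type*} [Field k] :
    let x : MvPowerSeries (Fin 2) k := X 0
    let y : MvPowerSeries (Fin 2) k := X 1
    let m : Ideal (MvPowerSeries (Fin 2) k) := Ideal.span {x, y}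
    let I : Ideal (MvPowerSeries (Fin 2) k) := Ideal.span {x ^ 3, x ^ 2 * y ^ 2, y ^ 3}
    Submodule.colon ((m ^ 2 * I : Ideal (MvPowerSeries (Fin 2) k)))
        ((m ^ 2 : Ideal (MvPowerSeries (Fin 2) k))) = m ^ 3 ∧
      I < Submodule.colon ((m ^ 2 * I : Ideal (MvPowerSeries (Fin 2) k)))
        ((m ^ 2 : Ideal (MvPowerSeries (Fin 2) k))) ∧
      Submodule.colon ((m * I : Ideal (MvPowerSeries (Fin 2) k))) m = I := by
  intro x y m I
  have hm : m = monomialIdeal k mExponents := span_X_pair_eq_monomialIdeal 0 1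
  have hI : I = monomialIdeal k iExponents := by
    simp only [I, x, y, monomialIdeal, iExponents, Set.image_insert_eq, Set.image_singleton,
      X_pow_eq, monomial_mul_monomial, mul_one]
  have hm2 : m ^ 2 = monomialIdeal k (mExponents + mExponents) := by
    rw [sq, hm, monomialIdeal_mul]
  have hm3 : m ^ 3 = monomialIdeal k (mExponents + mExponents + mExponents) := by
    rw [pow_succ, hm2, hm, monomialIdeal_mul]
  have hcolon_sq : (m ^ 2 * I).colon (m ^ 2 : Ideal (MvPowerSeries (Fin 2) k)) = m ^ 3 := by
    rw [hm2, hI, hm3, monomialIdeal_mul]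
    exact colon_monomialIdeal_eq (Set.toFinite _) (Set.toFinite _) _
      forall_add_mem_upperClosure_sq_iff
  refine ⟨hcolon_sq, ?_, ?_⟩
  · rw [hcolon_sq, hm3, hI]
    exact lt_of_le_not_ge (monomialIdeal_le_monomialIdeal_iff.2 iExponents_subset_upperClosure)
      (mt monomialIdeal_le_monomialIdeal_iff.1 not_subset_upperClosure_iExponents)
  · rw [hm, hI, monomialIdeal_mul]
    exact colon_monomialIdeal_eq (Set.toFinite _) (Set.toFinite _) _
      forall_add_mem_upperClosure_iff
end

section
/- In R = k[[t²,t³]] with m = (t²,t³): for every n ≥ 2, the m-basically full closure of the principal ideal (tⁿ + a·tⁿ⁺¹) (for any a ∈ k) equals (tⁿ, tⁿ⁺¹); that is, (m·(tⁿ + a·tⁿ⁺¹) :_R m) = (tⁿ, tⁿ⁺¹). -/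
set_option synthInstance.maxHeartbeats 1000000
set_option maxHeartbeats 1000000

open PowerSeries

/-- The complete numerical semigroup ring `k[[t²,t³]]`, realized as the subalgebra
of `k[[t]]` consisting of power series whose coefficient of `t` vanishes. -/
def SemigroupRing (k : Type*) [Field k] : Subalgebra k (PowerSeries k) where
  carrier := {f | coeff 1 f = 0}
  mul_mem' := by
    intro a b ha hb
    simp only [Set.mem_setOf_eq] at *
    rw [coeff_mul, Finset.Nat.sum_antidiagonal_eq_sum_range_succ_mk]
    simp [Finset.sum_range_succ, ha, hb]
  add_mem' := by
    intro a b ha hb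
    simp only [Set.mem_setOf_eq] at *
    simp [ha, hb]
  algebraMap_mem' := by
    intro r
    show coeff 1 ((algebraMap k (PowerSeries k)) r) = 0
    rw [PowerSeries.algebraMap_apply, coeff_C]
    simp

/-- `tⁿ` as an element of `k[[t²,t³]]` (defined to be `0` when `n = 1`). -/
noncomputable def tp (k : Type*) [Field k] (n : ℕ) : SemigroupRing k :=
  if h : n = 1 then 0
  else ⟨PowerSeries.X ^ n, by
    have : coeff 1 ((X : PowerSeries k) ^ n) = 0 := by simp [coeff_X_pow, Ne.symm h]
    exact this⟩

/-!
Inside `k[[t]]`, an ideal `(f)` of `R = k[[t²,t³]]` with `f = tⁿ·u`, `u` a unit of `k[[t]]`,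
satisfies `m·(f) = tⁿ⁺²k[[t]] ∩ R`: every series of order `≥ n + 2` is `(t²·h·u⁻¹)·f`, and
`t²·h·u⁻¹ ∈ m` because its coefficient of `t` vanishes. For `n ≥ 2` the ideal `tⁿk[[t]] ∩ R`
is `(tⁿ, tⁿ⁺¹)`, and since `t² ∈ m`, colon by `m = t²k[[t]] ∩ R` just lowers the order by two.
-/

namespace SemigroupRing

variable {k : Type*} [Field k]

theorem coe_tp {n : ℕ} (hn : n ≠ 1) : ((tp k n : SemigroupRing k) : k⟦X⟧) = X ^ n := by
  simp [tp, hn]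

theorem mem_of_X_sq_dvd {p : k⟦X⟧} (h : X ^ 2 ∣ p) : p ∈ SemigroupRing k :=
  X_pow_dvd_iff.mp h 1 one_lt_two

/-- The ideal `tⁿk[[t]] ∩ R` of elements of `R` of order at least `n`. -/
noncomputable def tPowIdeal (k : Type*) [Field k] (n : ℕ) : Ideal (SemigroupRing k) :=
  Ideal.comap (SemigroupRing k).val (Ideal.span {X ^ n})

@[simp]
theorem mem_tPowIdeal {n : ℕ} {g : SemigroupRing k} :
    g ∈ tPowIdeal k n ↔ (X : k⟦X⟧) ^ n ∣ (g : k⟦X⟧) := by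
  simp [tPowIdeal, Ideal.mem_span_singleton]

theorem tPowIdeal_mul_le (i j : ℕ) : tPowIdeal k i * tPowIdeal k j ≤ tPowIdeal k (i + j) := by
  refine Ideal.mul_le.mpr fun r hr s hs => ?_
  simp only [mem_tPowIdeal, Subalgebra.coe_mul, pow_add] at hr hs ⊢
  exact mul_dvd_mul hr hs

theorem span_tp_pair {n : ℕ} (hn : 2 ≤ n) :
    Ideal.span {tp k n, tp k (n + 1)} = tPowIdeal k n := by
  refine le_antisymm (Ideal.span_le.mpr ?_) fun g hg => ?_
  · simp only [Set.insert_subset_iff, Set.singleton_subset_iff, SetLike.mem_coe, mem_tPowIdeal,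
      coe_tp (show n ≠ 1 by omega), coe_tp (show n + 1 ≠ 1 by omega)]
    exact ⟨dvd_rfl, pow_dvd_pow X n.le_succ⟩
  obtain ⟨h, hh⟩ := mem_tPowIdeal.mp hg
  -- split off the `t`-term of `h`, which is the only obstruction to `h ∈ R`
  set c := coeff 1 h
  refine Ideal.mem_span_pair.mpr ⟨⟨h - C c * X, ?_⟩, ⟨C c, ?_⟩, Subtype.ext ?_⟩
  · simp [SemigroupRing, c]
  · simp [SemigroupRing]
  · push_cast [coe_tp (show n ≠ 1 by omega), coe_tp (show n + 1 ≠ 1 by omega), hh]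
    ring

theorem tPowIdeal_two_mul_span_singleton {n : ℕ} {f : SemigroupRing k} {u : k⟦X⟧ˣ}
    (hf : (f : k⟦X⟧) = X ^ n * (u : k⟦X⟧)) :
    tPowIdeal k 2 * Ideal.span {f} = tPowIdeal k (n + 2) := by
  refine le_antisymm ?_ fun g hg => ?_
  · rw [add_comm n]
    refine (Ideal.mul_mono_right ?_).trans (tPowIdeal_mul_le 2 n)
    rw [Ideal.span_singleton_le_iff_mem, mem_tPowIdeal, hf]
    exact dvd_mul_right _ _
  obtain ⟨h, hh⟩ := mem_tPowIdeal.mp hg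
  have hw : (X : k⟦X⟧) ^ 2 ∣ X ^ 2 * (h * ((u⁻¹ : k⟦X⟧ˣ) : k⟦X⟧)) := dvd_mul_right _ _
  let w : SemigroupRing k := ⟨_, mem_of_X_sq_dvd hw⟩
  have hgw : g = w * f := by
    apply Subtype.ext
    simp only [Subalgebra.coe_mul, hf, w, hh]
    linear_combination (X ^ (n + 2) * h) * (Units.mul_inv u).symm
  rw [hgw]
  exact Ideal.mul_mem_mul (mem_tPowIdeal.mpr hw) (Ideal.mem_span_singleton_self f)

theorem colon_tPowIdeal_two (n : ℕ) :
    Submodule.colon (tPowIdeal k (n + 2)) (tPowIdeal k 2 : Set (SemigroupRing k)) =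
      tPowIdeal k n := by
  ext g
  refine ⟨fun hg => ?_, fun hg => Submodule.mem_colon.mpr fun x hx =>
    tPowIdeal_mul_le n 2 (Ideal.mul_mem_mul hg hx)⟩
  have ht2 : tp k 2 ∈ tPowIdeal k 2 := by simp [coe_tp]
  have hdvd := mem_tPowIdeal.mp (Submodule.mem_colon.mp hg _ ht2)
  rw [smul_eq_mul, Subalgebra.coe_mul, coe_tp (by norm_num), pow_add] at hdvd
  exact mem_tPowIdeal.mpr ((mul_dvd_mul_iff_right (pow_ne_zero 2 X_ne_zero)).mp hdvd)

theorem coe_tp_add_smul_tp {n : ℕ} (hn : 2 ≤ n) (a : k) :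
    ((tp k n + a • tp k (n + 1) : SemigroupRing k) : k⟦X⟧) = X ^ n * (1 + C a * X) := by
  push_cast [coe_tp (show n ≠ 1 by omega), coe_tp (show n + 1 ≠ 1 by omega), smul_eq_C_mul]
  ring

theorem isUnit_one_add_C_mul_X {R : Type*} [CommRing R] (a : R) : IsUnit (1 + C a * X) := by
  simp [isUnit_iff_constantCoeff]

end SemigroupRing

open SemigroupRing in
/-- In `R = k[[t²,t³]]` with `m = (t²,t³)`: for every `n ≥ 2` and `a ∈ k`, the
m-basically full closure of `(tⁿ + a·tⁿ⁺¹)` equals `(tⁿ, tⁿ⁺¹)`. -/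
theorem semigroup_bf_closure_principal {k : Type*} [Field k] (n : ℕ) (hn : 2 ≤ n)
    (a : k) :
    Submodule.colon
        ((Ideal.span {tp k 2, tp k 3} : Ideal (SemigroupRing k)) *
          Ideal.span {tp k n + a • tp k (n + 1)})
        (Ideal.span {tp k 2, tp k 3}) =
      Ideal.span {tp k n, tp k (n + 1)} := by
  obtain ⟨u, hu⟩ := isUnit_one_add_C_mul_X a
  have hf := coe_tp_add_smul_tp hn a
  rw [← hu] at hf
  rw [span_tp_pair hn, span_tp_pair (le_refl 2), tPowIdeal_two_mul_span_singleton hf,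
    colon_tPowIdeal_two]
end
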